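/- arXiv:0811.3779 — 2 statements merged into one kernel-verified Lean document; each statement's English description precedes it below -/
import Mathlib

section
/- Let G=(V,E) be a finite simple undirected graph, let A ⊆ V be nonempty, and let T be a nonnegative integer. For a vertex x, let esc(x,T,A) be the probability that a lazy random walk started from x leaves A within the first T steps, and define A_T = { x ∈ A : esc(x,T,A) ≤ T·φ(A) }. Then μ(A_T) ≥ (1/2)·μ(A). -/
/-!
Let `s_T(x)` be the probability that the lazy walk from `x` stays in `A` during steps
`0, …, T`. Since `d(x) p(x,y)` is symmetric, one step of the walk decreases the
degree-weighted mass `∑_{x ∈ A} d(x) s_T(x)` by at most `∑_{y ∈ A} e(y, Aᶜ) / 2 = ∂(A) / 2`.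
Hence `∑_{x ∈ A} d(x) esc(x,T,A) ≤ ∑_{x ∈ A} d(x) (1 - s_T(x)) ≤ T ∂(A) / 2 = T φ(A) μ(A) / 2`,
and Markov's inequality for the weights `d` on `A` bounds the volume of `{esc > T φ(A)}`
by `μ(A) / 2`.
-/

open scoped Classical symmDiff

noncomputable section

variable {V : Type*} [Fintype V] [DecidableEq V]

/-- The volume `μ(S)` of a set of vertices: the sum of the degrees. -/
def vol (G : SimpleGraph V) [DecidableRel G.Adj] (S : Finset V) : ℝ :=
  ∑ x ∈ S, (G.degree x : ℝ)

/-- The number of edges leaving `S`, i.e. `∂(S) = e(S, Sᶜ)`. -/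
def bdry (G : SimpleGraph V) [DecidableRel G.Adj] (S : Finset V) : ℝ :=
  ∑ x ∈ S, ((Sᶜ.filter (G.Adj x)).card : ℝ)

/-- The conductance `φ(S) = ∂(S)/μ(S)`. -/
def phiCond (G : SimpleGraph V) [DecidableRel G.Adj] (S : Finset V) : ℝ :=
  bdry G S / vol G S

/-- The lazy random walk kernel `p(x,y)`: `1/2` if `x = y`, `1/(2 d(x))` if `x ~ y`,
and `0` otherwise. -/
def walkP (G : SimpleGraph V) [DecidableRel G.Adj] (x y : V) : ℝ :=
  if x = y then 1/2 else if G.Adj x y then 1 / (2 * (G.degree x : ℝ)) else 0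

/-- `p(x,S) = Σ_{y∈S} p(x,y)`. -/
def pset (G : SimpleGraph V) [DecidableRel G.Adj] (x : V) (S : Finset V) : ℝ :=
  ∑ y ∈ S, walkP G x y

/-- One step of the evolving set process from `S` with threshold `u`:
`S₁ = {y : p(y,S) ≥ u}`. -/
def esStep (G : SimpleGraph V) [DecidableRel G.Adj] (S : Finset V) (u : ℝ) : Finset V :=
  Finset.univ.filter fun y => u ≤ pset G y S

/-- The ESP transition kernel `K(S,S')`: the probability, for a uniform threshold
`U ∈ [0,1]`, that `{y : p(y,S) ≥ U} = S'`. -/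
def Kk (G : SimpleGraph V) [DecidableRel G.Adj] (S S' : Finset V) : ℝ :=
  (MeasureTheory.volume {u : ℝ | u ∈ Set.Icc (0:ℝ) 1 ∧ esStep G S u = S'}).toReal

/-- The volume-biased ESP transition kernel `K̂(S,S') = (μ(S')/μ(S)) K(S,S')`. -/
def Khat (G : SimpleGraph V) [DecidableRel G.Adj] (S S' : Finset V) : ℝ :=
  vol G S' / vol G S * Kk G S S'

/-- `esc(x,T,A)`: the probability that the lazy random walk started from `x`
leaves `A` within the first `T` steps. -/
def escProb (G : SimpleGraph V) [DecidableRel G.Adj] (x : V) (T : ℕ) (A : Finset V) : ℝ :=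
  ∑ v : Fin (T+1) → V,
    if v 0 = x ∧ ∃ j : Fin (T+1), v j ∉ A
    then ∏ j : Fin T, walkP G (v j.castSucc) (v j.succ) else 0

open Finset

lemma sum_fin_succ_pi {α : Type*} [Fintype α] {n : ℕ} (F : (Fin (n + 1) → α) → ℝ) :
    ∑ v, F v = ∑ x, ∑ t : Fin n → α, F (Fin.cons x t) :=
  (Fintype.sum_equiv (Fin.consEquiv fun _ => α) _ F fun _ => rfl).symm.trans
    (Fintype.sum_prod_type _)

lemma sum_div_two_le_sum_filter_le {ι : Type*} (s : Finset ι) (w f : ι → ℝ) {c : ℝ}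
    (hw : ∀ x ∈ s, 0 ≤ w x) (hf : ∀ x ∈ s, 0 ≤ f x) (hc : 0 ≤ c)
    (h : ∑ x ∈ s, w x * f x ≤ c * (∑ x ∈ s, w x) / 2) :
    (∑ x ∈ s, w x) / 2 ≤ ∑ x ∈ s with f x ≤ c, w x := by
  have hwf : ∀ x ∈ s, 0 ≤ w x * f x := fun x hx => mul_nonneg (hw x hx) (hf x hx)
  have hsplit := sum_filter_add_sum_filter_not s (fun x => f x ≤ c) w
  have hgood : 0 ≤ ∑ x ∈ s with f x ≤ c, w x :=
    sum_nonneg fun x hx => hw x (mem_filter.mp hx).1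
  rcases hc.eq_or_lt with rfl | hc
  · have hwf0 : ∀ x ∈ s, w x * f x = 0 :=
      (sum_eq_zero_iff_of_nonneg hwf).mp (le_antisymm (by simpa using h) (sum_nonneg hwf))
    have hbad : ∑ x ∈ s with ¬f x ≤ 0, w x = 0 := sum_eq_zero fun x hx =>
      (mul_eq_zero.mp (hwf0 x (mem_filter.mp hx).1)).resolve_right
        (not_le.mp (mem_filter.mp hx).2).ne'
    linarith
  · have hbad : c * ∑ x ∈ s with ¬f x ≤ c, w x ≤ ∑ x ∈ s, w x * f x := by
      rw [mul_sum]
      refine (sum_le_sum fun x hx => ?_).trans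
        (sum_le_sum_of_subset_of_nonneg (filter_subset _ s) fun x hx _ => hwf x hx)
      rw [mul_comm]
      exact mul_le_mul_of_nonneg_left (not_le.mp (mem_filter.mp hx).2).le
        (hw x (mem_filter.mp hx).1)
    nlinarith

section LazyWalk

variable (G : SimpleGraph V) [DecidableRel G.Adj]

lemma walkP_nonneg (x y : V) : 0 ≤ walkP G x y := by
  unfold walkP; split_ifs <;> positivity

lemma degree_mul_walkP (x y : V) :
    G.degree x * walkP G x y =
      (if x = y then (G.degree x : ℝ) / 2 else 0) + if G.Adj x y then 1 / 2 else 0 := by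
  unfold walkP
  by_cases hxy : x = y
  · simp only [hxy, if_true, SimpleGraph.irrefl, if_false]
    ring
  by_cases hadj : G.Adj x y
  · have : (0 : ℝ) < G.degree x := by
      exact_mod_cast G.degree_pos_iff_exists_adj x |>.mpr ⟨y, hadj⟩
    simp only [hxy, hadj, if_true, if_false, zero_add]
    field_simp
  · simp [hxy, hadj]

lemma degree_mul_walkP_comm (x y : V) :
    G.degree x * walkP G x y = G.degree y * walkP G y x := by
  rw [degree_mul_walkP, degree_mul_walkP]
  by_cases hxy : x = y
  · subst hxy; rfl
  · simp [hxy, Ne.symm hxy, G.adj_comm]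

lemma degree_mul_sum_walkP (S : Finset V) (x : V) :
    G.degree x * ∑ y ∈ S, walkP G x y =
      (if x ∈ S then (G.degree x : ℝ) / 2 else 0) + #{y ∈ S | G.Adj x y} / 2 := by
  rw [mul_sum, sum_congr rfl fun y _ => degree_mul_walkP G x y, sum_add_distrib, sum_ite_eq,
    ← sum_filter, sum_const, nsmul_eq_mul]
  ring

lemma degree_mul_sum_walkP_univ (x : V) :
    G.degree x * ∑ y, walkP G x y = G.degree x := by
  rw [degree_mul_sum_walkP, ← G.neighborFinset_eq_filter, G.card_neighborFinset_eq_degree]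
  simp

/-- At an isolated vertex the total mass of the kernel is only `1 / 2`. -/
lemma sum_walkP_le_one (x : V) : ∑ y, walkP G x y ≤ 1 := by
  rcases (G.degree x).eq_zero_or_pos with h | h
  · have hnadj : ∀ y, ¬ G.Adj x y := fun y hy =>
      h.not_gt (G.degree_pos_iff_exists_adj x |>.mpr ⟨y, hy⟩)
    simp only [walkP, hnadj, if_false, sum_ite_eq, mem_univ, if_true]
    norm_num
  · have hd : (G.degree x : ℝ) ≠ 0 := by exact_mod_cast h.ne'
    exact (mul_left_cancel₀ hd ((degree_mul_sum_walkP_univ G x).trans (mul_one _).symm)).le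

lemma degree_mul_sum_walkP_of_mem {A : Finset V} {x : V} (hx : x ∈ A) :
    G.degree x * ∑ y ∈ A, walkP G x y = G.degree x - #{y ∈ Aᶜ | G.Adj x y} / 2 := by
  have hcompl := degree_mul_sum_walkP G Aᶜ x
  rw [if_neg (notMem_compl.mpr hx), zero_add] at hcompl
  have huniv := degree_mul_sum_walkP_univ G x
  rw [← sum_add_sum_compl A, mul_add, hcompl] at huniv
  linarith

def pathWeight (T : ℕ) (v : Fin (T + 1) → V) : ℝ :=
  ∏ j : Fin T, walkP G (v j.castSucc) (v j.succ)

lemma pathWeight_nonneg (T : ℕ) (v : Fin (T + 1) → V) : 0 ≤ pathWeight G T v :=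
  prod_nonneg fun _ _ => walkP_nonneg G _ _

lemma pathWeight_cons (T : ℕ) (x : V) (t : Fin (T + 1) → V) :
    pathWeight G (T + 1) (Fin.cons x t) = walkP G x (t 0) * pathWeight G T t := by
  rw [pathWeight, Fin.prod_univ_succ]
  rfl

def stayProb (A : Finset V) (T : ℕ) (x : V) : ℝ :=
  ∑ v : Fin (T + 1) → V, if v 0 = x ∧ ∀ j, v j ∈ A then pathWeight G T v else 0

lemma escProb_add_stayProb (A : Finset V) (T : ℕ) (x : V) :
    escProb G x T A + stayProb G A T x = stayProb G univ T x := by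
  rw [escProb, stayProb, stayProb, ← sum_add_distrib]
  refine sum_congr rfl fun v _ => ?_
  by_cases hv : ∀ j, v j ∈ A
  · simp [hv]
  · push Not at hv
    simp [hv, pathWeight]

lemma stayProb_zero (A : Finset V) (x : V) : stayProb G A 0 x = if x ∈ A then 1 else 0 := by
  rw [stayProb, sum_fin_succ_pi]
  simp [pathWeight, Fin.forall_fin_one, ite_and]

lemma stayProb_succ (A : Finset V) (T : ℕ) (x : V) :
    stayProb G A (T + 1) x = if x ∈ A then ∑ y, walkP G x y * stayProb G A T y else 0 := by
  have hcons (y : V) (t : Fin (T + 1) → V) :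
      (∀ j, (Fin.cons y t : Fin (T + 2) → V) j ∈ A) ↔ y ∈ A ∧ ∀ j, t j ∈ A := by
    rw [Fin.forall_fin_succ]
    simp only [Fin.cons_zero, Fin.cons_succ]
  simp only [stayProb, sum_fin_succ_pi (n := T + 1), pathWeight_cons, Fin.cons_zero, hcons,
    ite_and, sum_ite_irrel, sum_const_zero, sum_ite_eq', mem_univ, if_true]
  split_ifs
  · simp only [mul_sum, mul_ite, mul_zero]
    rw [sum_comm]
    simp
  · rfl

lemma stayProb_le_one (A : Finset V) (T : ℕ) (x : V) : stayProb G A T x ≤ 1 := by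
  induction T generalizing x with
  | zero => rw [stayProb_zero]; split_ifs <;> norm_num
  | succ T ih =>
    rw [stayProb_succ]
    split_ifs
    · calc ∑ y, walkP G x y * stayProb G A T y ≤ ∑ y, walkP G x y :=
            sum_le_sum fun y _ => mul_le_of_le_one_right (walkP_nonneg G x y) (ih y)
        _ ≤ 1 := sum_walkP_le_one G x
    · norm_num

lemma escProb_nonneg (A : Finset V) (T : ℕ) (x : V) : 0 ≤ escProb G x T A :=
  sum_nonneg fun v _ => by split_ifs; exacts [pathWeight_nonneg G T v, le_rfl]

lemma escProb_le_one_sub_stayProb (A : Finset V) (T : ℕ) (x : V) :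
    escProb G x T A ≤ 1 - stayProb G A T x := by
  linarith [escProb_add_stayProb G A T x, stayProb_le_one G univ T x]

lemma sum_degree_mul_stayProb_succ (A : Finset V) (T : ℕ) :
    ∑ x ∈ A, G.degree x * stayProb G A (T + 1) x =
      ∑ y ∈ A, (G.degree y - #{x ∈ Aᶜ | G.Adj y x} / 2 : ℝ) * stayProb G A T y := by
  have hstay_out : ∀ y ∉ A, stayProb G A T y = 0 := fun y hy => by
    cases T <;> simp [stayProb_zero, stayProb_succ, hy]
  calc ∑ x ∈ A, G.degree x * stayProb G A (T + 1) x
      = ∑ x ∈ A, ∑ y, G.degree y * walkP G y x * stayProb G A T y := by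
        refine sum_congr rfl fun x hx => ?_
        simp only [stayProb_succ, if_pos hx, mul_sum, ← mul_assoc, degree_mul_walkP_comm G x]
    _ = ∑ y, (G.degree y * ∑ x ∈ A, walkP G y x) * stayProb G A T y := by
        rw [sum_comm]
        simp only [mul_sum, sum_mul]
    _ = ∑ y ∈ A, (G.degree y * ∑ x ∈ A, walkP G y x) * stayProb G A T y :=
        (sum_subset (subset_univ A) fun y _ hy => by rw [hstay_out y hy, mul_zero]).symm
    _ = _ := sum_congr rfl fun y hy => by rw [degree_mul_sum_walkP_of_mem G hy]

lemma sum_degree_mul_one_sub_stayProb_le (A : Finset V) (T : ℕ) :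
    ∑ x ∈ A, G.degree x * (1 - stayProb G A T x) ≤ T * bdry G A / 2 := by
  induction T with
  | zero => simp +contextual [stayProb_zero]
  | succ T ih =>
    have hleak :
        ∑ y ∈ A, (#{x ∈ Aᶜ | G.Adj y x} / 2 : ℝ) * stayProb G A T y ≤ bdry G A / 2 := by
      rw [bdry, sum_div]
      exact sum_le_sum fun y _ => mul_le_of_le_one_right (by positivity) (stayProb_le_one G A T y)
    have hsplit : ∑ x ∈ A, G.degree x * (1 - stayProb G A (T + 1) x) =
        ∑ x ∈ A, G.degree x * (1 - stayProb G A T x) +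
          ∑ y ∈ A, (#{x ∈ Aᶜ | G.Adj y x} / 2 : ℝ) * stayProb G A T y := by
      simp only [mul_one_sub, sum_sub_distrib, sum_degree_mul_stayProb_succ, sub_mul]
      ring
    rw [hsplit]
    push_cast
    linarith

lemma sum_degree_mul_escProb_le (A : Finset V) (T : ℕ) :
    ∑ x ∈ A, G.degree x * escProb G x T A ≤ T * bdry G A / 2 :=
  (sum_le_sum fun x _ => mul_le_mul_of_nonneg_left (escProb_le_one_sub_stayProb G A T x)
    (Nat.cast_nonneg _)).trans (sum_degree_mul_one_sub_stayProb_le G A T)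

lemma bdry_nonneg (A : Finset V) : 0 ≤ bdry G A := sum_nonneg fun _ _ => Nat.cast_nonneg _

lemma phiCond_nonneg (A : Finset V) : 0 ≤ phiCond G A :=
  div_nonneg (bdry_nonneg G A) (sum_nonneg fun _ _ => Nat.cast_nonneg _)

lemma bdry_le_vol (A : Finset V) : bdry G A ≤ vol G A := by
  refine sum_le_sum fun x _ => ?_
  rw [← G.card_neighborFinset_eq_degree, G.neighborFinset_eq_filter]
  exact_mod_cast card_le_card (filter_subset_filter _ (subset_univ _))

lemma phiCond_mul_vol (A : Finset V) : phiCond G A * vol G A = bdry G A := by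
  rcases eq_or_ne (vol G A) 0 with h | h
  · have : bdry G A = 0 := le_antisymm (h ▸ bdry_le_vol G A) (bdry_nonneg G A)
    simp [h, this]
  · exact div_mul_cancel₀ _ h

end LazyWalk

theorem statement12_general (G : SimpleGraph V) [DecidableRel G.Adj]
    (A : Finset V) (T : ℕ) :
    vol G A / 2 ≤ vol G (A.filter fun x => escProb G x T A ≤ T * phiCond G A) := by
  refine sum_div_two_le_sum_filter_le A (fun x => (G.degree x : ℝ)) (fun x => escProb G x T A)
    (fun _ _ => Nat.cast_nonneg _) (fun x _ => escProb_nonneg G A T x)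
    (mul_nonneg (Nat.cast_nonneg T) (phiCond_nonneg G A)) ?_
  calc ∑ x ∈ A, G.degree x * escProb G x T A ≤ T * bdry G A / 2 :=
        sum_degree_mul_escProb_le G A T
    _ = T * phiCond G A * vol G A / 2 := by rw [mul_assoc, phiCond_mul_vol]

/-- Proposition 4: for a nonempty set `A` and `T ≥ 0`, the subset
`A_T = {x ∈ A : esc(x,T,A) ≤ T φ(A)}` satisfies `μ(A_T) ≥ μ(A)/2`. -/
theorem statement12 (G : SimpleGraph V) [DecidableRel G.Adj]
    (A : Finset V) (hA : A.Nonempty) (T : ℕ) :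
    vol G A / 2 ≤ vol G (A.filter fun x => escProb G x T A ≤ T * phiCond G A) :=
  statement12_general G A T
end
end

section
/- Let G=(V,E) be a finite simple undirected graph and let (S_t) be the evolving set process. For each step j ≥ 1, the conditional expectation of the volume of the symmetric difference between consecutive states satisfies E[ μ(S_j Δ S_{j-1}) | S_{j-1} ] = ∂(S_{j-1}). -/
open scoped Classical symmDiff

noncomputable section

variable {V : Type*} [Fintype V] [DecidableEq V]

/-!
Given `S`, a vertex `x ∈ S` drops out of `S₁` exactly when `U > p(x,S)`, which has probability
`1 - p(x,S) = |N(x) ∩ Sᶜ| / (2 d(x))`, and a vertex `x ∉ S` enters `S₁` when `U ≤ p(x,S)`, with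
probability `|N(x) ∩ S| / (2 d(x))`. Weighted by `d(x)`, each boundary edge of `S` is thus counted
with weight `1/2` from each of its two endpoints.
-/

open MeasureTheory Finset

section EvolvingSet

variable (G : SimpleGraph V) [DecidableRel G.Adj]

lemma card_filter_adj_add_card_filter_adj_compl (x : V) (S : Finset V) :
    #(S.filter (G.Adj x)) + #(Sᶜ.filter (G.Adj x)) = G.degree x := by
  rw [← card_union_of_disjoint (disjoint_filter_filter disjoint_compl_right), ← filter_union,
    union_compl, ← G.card_neighborFinset_eq_degree, G.neighborFinset_eq_filter]

lemma sum_compl_card_filter_adj_eq_bdry (S : Finset V) :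
    ∑ x ∈ Sᶜ, (#(S.filter (G.Adj x)) : ℝ) = bdry G S := by
  have h := sum_card_bipartiteAbove_eq_sum_card_bipartiteBelow (s := S) (t := Sᶜ) (r := G.Adj)
  simp only [bipartiteAbove, bipartiteBelow, G.adj_comm _] at h
  rw [bdry]
  exact_mod_cast h.symm

lemma pset_eq (x : V) (S : Finset V) :
    pset G x S = (if x ∈ S then (1 / 2 : ℝ) else 0)
      + #(S.filter (G.Adj x)) / (2 * (G.degree x : ℝ)) := by
  have h : ∀ y, walkP G x y = (if x = y then (1 / 2 : ℝ) else 0)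
      + (if G.Adj x y then 1 / (2 * (G.degree x : ℝ)) else 0) := by
    intro y
    by_cases hxy : x = y
    · simp [walkP, hxy]
    · simp [walkP, hxy]
  simp only [pset, h, sum_add_distrib, sum_ite_eq, ← sum_filter, sum_const, nsmul_eq_mul,
    mul_one_div]

lemma pset_mem_Icc (x : V) (S : Finset V) : pset G x S ∈ Set.Icc 0 1 := by
  have hcard : (#(S.filter (G.Adj x)) : ℝ) ≤ G.degree x := by
    exact_mod_cast (card_filter_adj_add_card_filter_adj_compl G x S).le.trans' le_self_add
  have hfrac : (#(S.filter (G.Adj x)) : ℝ) / (2 * G.degree x) ≤ 1 / 2 := by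
    rw [mul_comm, ← div_div]
    gcongr
    exact div_le_one_of_le₀ hcard (by positivity)
  rw [pset_eq]
  constructor <;> split_ifs <;> first | positivity | linarith

lemma esStep_antitone (S : Finset V) : Antitone (esStep G S) := by
  intro u v huv x hx
  simp only [esStep, mem_filter, mem_univ, true_and] at hx ⊢
  exact huv.trans hx

lemma Kk_eq_measureReal (S S' : Finset V) :
    Kk G S S' = (volume.restrict (Set.Icc (0 : ℝ) 1)).real (esStep G S ⁻¹' {S'}) := by
  rw [Kk, measureReal_restrict_apply' measurableSet_Icc, measureReal_def, Set.inter_comm]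
  rfl

-- `esStep G S` is antitone, so its fibres are intervals and hence measurable.
lemma sum_Kk_eq_measureReal (S : Finset V) (T : Finset (Finset V)) :
    ∑ S' ∈ T, Kk G S S' = (volume.restrict (Set.Icc (0 : ℝ) 1)).real (esStep G S ⁻¹' T) := by
  simp only [Kk_eq_measureReal]
  exact sum_measureReal_preimage_singleton T fun S' _ ↦
    (Set.ordConnected_singleton.preimage_anti (esStep_antitone G S)).measurableSet

lemma measureReal_mem_symmDiff_esStep (x : V) (S : Finset V) :
    (volume.restrict (Set.Icc (0 : ℝ) 1)).real {u | x ∈ esStep G S u ∆ S}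
      = if x ∈ S then 1 - pset G x S else pset G x S := by
  obtain ⟨h0, h1⟩ := pset_mem_Icc G x S
  rw [measureReal_restrict_apply' measurableSet_Icc]
  split_ifs with hx
  · have : {u | x ∈ esStep G S u ∆ S} ∩ Set.Icc 0 1 = Set.Ioc (pset G x S) 1 := by
      ext u
      simp only [esStep, Set.mem_inter_iff, Set.mem_ofPred_eq, mem_symmDiff, mem_filter,
        mem_univ, true_and, hx, Set.mem_Icc, Set.mem_Ioc, not_true, and_false, false_or, not_le]
      exact ⟨fun ⟨h, _, h'⟩ ↦ ⟨h, h'⟩, fun ⟨h, h'⟩ ↦ ⟨h, h0.trans h.le, h'⟩⟩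
    rw [this, Real.volume_real_Ioc_of_le h1]
  · have : {u | x ∈ esStep G S u ∆ S} ∩ Set.Icc 0 1 = Set.Icc 0 (pset G x S) := by
      ext u
      simp only [esStep, Set.mem_inter_iff, Set.mem_ofPred_eq, mem_symmDiff, mem_filter,
        mem_univ, true_and, hx, Set.mem_Icc, not_false_eq_true, and_true, false_and, or_false]
      exact ⟨fun ⟨h, h', _⟩ ↦ ⟨h', h⟩, fun ⟨h', h⟩ ↦ ⟨h, h', h.trans h1⟩⟩
    rw [this, Real.volume_real_Icc_of_le h0, sub_zero]

lemma degree_mul_measureReal_mem_symmDiff_esStep (x : V) (S : Finset V) :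
    G.degree x * (volume.restrict (Set.Icc (0 : ℝ) 1)).real {u | x ∈ esStep G S u ∆ S}
      = (if x ∈ S then #(Sᶜ.filter (G.Adj x)) else #(S.filter (G.Adj x)) : ℝ) / 2 := by
  have hsplit := card_filter_adj_add_card_filter_adj_compl G x S
  rw [measureReal_mem_symmDiff_esStep, pset_eq]
  rcases eq_or_ne (G.degree x) 0 with hd | hd
  · obtain ⟨hin, hout⟩ : #(S.filter (G.Adj x)) = 0 ∧ #(Sᶜ.filter (G.Adj x)) = 0 := by omega
    simp [hd, hin, hout]
  · have hsplit' : (#(S.filter (G.Adj x)) + #(Sᶜ.filter (G.Adj x)) : ℝ) = G.degree x := by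
      exact_mod_cast hsplit
    split_ifs
    · field_simp
      linarith
    · rw [zero_add]
      field_simp

end EvolvingSet

/-- For the evolving set process, the conditional expectation of the volume of the
symmetric difference between consecutive states satisfies
`E[μ(S_j Δ S_{j-1}) | S_{j-1} = S] = ∂(S)` for every state `S`. -/
theorem statement15 (G : SimpleGraph V) [DecidableRel G.Adj] :
    ∀ S : Finset V, ∑ S' : Finset V, Kk G S S' * vol G (symmDiff S' S) = bdry G S := by
  intro S
  calc ∑ S' : Finset V, Kk G S S' * vol G (S' ∆ S)
      = ∑ x : V, G.degree x * ∑ S' ∈ univ.filter (x ∈ · ∆ S), Kk G S S' := by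
        simp only [vol, mul_sum]
        rw [sum_comm' (t' := univ) (s' := fun x ↦ univ.filter (x ∈ · ∆ S)) (by simp)]
        simp only [mul_comm]
    _ = ∑ x : V, G.degree x *
          (volume.restrict (Set.Icc (0 : ℝ) 1)).real {u | x ∈ esStep G S u ∆ S} := by
        simp only [sum_Kk_eq_measureReal, coe_filter, mem_univ, true_and]
        rfl
    _ = (∑ x ∈ S, (#(Sᶜ.filter (G.Adj x)) : ℝ) + ∑ x ∈ Sᶜ, (#(S.filter (G.Adj x)) : ℝ)) / 2 := by
        rw [add_div, sum_div, sum_div, ← sum_add_sum_compl S]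
        congr 1
        · exact sum_congr rfl fun x hx ↦ by
            rw [degree_mul_measureReal_mem_symmDiff_esStep, if_pos hx]
        · exact sum_congr rfl fun x hx ↦ by
            rw [degree_mul_measureReal_mem_symmDiff_esStep, if_neg (mem_compl.1 hx)]
    _ = bdry G S := by
        rw [sum_compl_card_filter_adj_eq_bdry, bdry]
        ring
end
end
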